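/- If the matrix P contains no zero entries and there exists an infinite set of indices n such that some p_{i,n} < 0, then F has no interval of monotonicity in [0,1]: every subinterval of [0,1] contains two cylinders on one of which the increment of F is positive and on the other negative. -/
import Mathlib


open Finset Filter Topology MeasureTheory

noncomputable section

/-- `rowSum p n k = Σ_{i<k} p_{i,n}` (the numbers `β_{k,n}`). -/
def rowSum (p : ℕ → ℕ → ℝ) (n k : ℕ) : ℝ := ∑ i ∈ Finset.range k, p n i

/-- Index flip at even positions: `tw m f n i = f n i` for odd `n`, `f n (m n - i)` for even `n`. -/
def tw (m : ℕ → ℕ) (f : ℕ → ℕ → ℝ) (n i : ℕ) : ℝ :=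
  if Odd n then f n i else f n (m n - i)

/-- Tail value of the (nega-)expansion determined by `f` from position `k+1` on. -/
def negaShift (m : ℕ → ℕ) (f : ℕ → ℕ → ℝ) (d : ℕ → ℕ) (k : ℕ) : ℝ :=
  ∑' j : ℕ, tw m (rowSum f) (k + j + 1) (d (k + j + 1)) *
    ∏ t ∈ Finset.Icc (k + 1) (k + j), tw m f t (d t)

/-- The nega-expansion value: `negaVal m f d = β̃_{d₁,1} + Σ_{k≥2} β̃_{d_k,k} Π_{j<k} f̃_{d_j,j}`. -/
def negaVal (m : ℕ → ℕ) (f : ℕ → ℕ → ℝ) (d : ℕ → ℕ) : ℝ := negaShift m f d 0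

/-- A digit sequence for the alphabet sizes `m`. -/
def ValidDigits (m : ℕ → ℕ) (d : ℕ → ℕ) : Prop := ∀ n, d n ≤ m n

namespace Stmt7Aux

def trm (m : ℕ → ℕ) (f : ℕ → ℕ → ℝ) (e : ℕ → ℕ) (k j : ℕ) : ℝ :=
  tw m (rowSum f) (k + j + 1) (e (k + j + 1)) *
    ∏ t ∈ Finset.Icc (k + 1) (k + j), tw m f t (e t)

lemma negaShift_eq_tsum (m : ℕ → ℕ) (f : ℕ → ℕ → ℝ) (e : ℕ → ℕ) (k : ℕ) :
    negaShift m f e k = ∑' j, trm m f e k j := rfl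

lemma negaVal_eq_tsum (m : ℕ → ℕ) (f : ℕ → ℕ → ℝ) (e : ℕ → ℕ) :
    negaVal m f e = ∑' j, trm m f e 0 j := rfl

lemma tw_rowSum_min (m : ℕ → ℕ) (f : ℕ → ℕ → ℝ) (t : ℕ) :
    tw m (rowSum f) t (if Odd t then 0 else m t) = 0 := by
  by_cases h : Odd t <;> simp [tw, rowSum, h]

lemma prod_Icc_split (g : ℕ → ℝ) (n i : ℕ) :
    ∏ t ∈ Finset.Icc 1 (n + i), g t =
      (∏ t ∈ Finset.Icc 1 n, g t) * ∏ t ∈ Finset.Icc (n + 1) (n + i), g t := by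
  induction i with
  | zero => simp [Finset.Icc_eq_empty (by omega : ¬ n + 1 ≤ n + 0)]
  | succ i ih =>
      rw [show n + (i+1) = (n+i) + 1 from rfl,
        Finset.prod_Icc_succ_top (by omega : 1 ≤ n + i + 1),
        Finset.prod_Icc_succ_top (by omega : n + 1 ≤ n + i + 1), ih, mul_assoc]

lemma trm_add (m : ℕ → ℕ) (f : ℕ → ℕ → ℝ) (e : ℕ → ℕ) (n j : ℕ) :
    trm m f e 0 (j + n) = (∏ t ∈ Finset.Icc 1 n, tw m f t (e t)) * trm m f e n j := by
  unfold trm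
  have h1 : 0 + (j + n) + 1 = n + j + 1 := by omega
  have h2 : 0 + (j + n) = n + j := by omega
  have h3 : (0 : ℕ) + 1 = 1 := rfl
  rw [h1, h2, h3, prod_Icc_split (fun t => tw m f t (e t)) n j]
  ring

lemma negaVal_split (m : ℕ → ℕ) (f : ℕ → ℕ → ℝ) (e : ℕ → ℕ) (n : ℕ)
    (hs : Summable (trm m f e 0)) :
    negaVal m f e = (∑ j ∈ Finset.range n, trm m f e 0 j)
      + (∏ t ∈ Finset.Icc 1 n, tw m f t (e t)) * negaShift m f e n := by
  rw [negaVal_eq_tsum, ← Summable.sum_add_tsum_nat_add n hs]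
  congr 1
  rw [negaShift_eq_tsum, ← tsum_mul_left]
  exact tsum_congr fun j => trm_add m f e n j

section qbounds

variable {m : ℕ → ℕ} {q : ℕ → ℕ → ℝ}
variable (hq1 : ∀ n i, i ≤ m n → 0 < q n i)
variable (hq2 : ∀ n, ∑ i ∈ Finset.range (m n + 1), q n i = 1)

include hq1 hq2 in
lemma q_tw_bounds (t i : ℕ) (hi : i ≤ m t) :
    0 ≤ tw m (rowSum q) t i ∧ 0 < tw m q t i ∧
      tw m (rowSum q) t i + tw m q t i ≤ 1 := by
  have key : ∀ j, j ≤ m t → 0 ≤ rowSum q t j ∧ 0 < q t j ∧ rowSum q t j + q t j ≤ 1 := by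
    intro j hj
    refine ⟨Finset.sum_nonneg fun i hi' =>
      (hq1 t i (by have := Finset.mem_range.mp hi'; omega)).le, hq1 t j hj, ?_⟩
    have h1 : rowSum q t j + q t j = ∑ i ∈ Finset.range (j+1), q t i :=
      (Finset.sum_range_succ _ _).symm
    rw [h1, ← hq2 t]
    apply Finset.sum_le_sum_of_subset_of_nonneg
    · exact Finset.range_subset_range.mpr (by omega)
    · intro i hi' _
      exact (hq1 t i (by have := Finset.mem_range.mp hi'; omega)).le
  unfold tw
  split
  · exact key i hi
  · exact key (m t - i) (Nat.sub_le _ _)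

include hq1 hq2 in
lemma q_trm_nonneg {e : ℕ → ℕ} (he : ValidDigits m e) (k j : ℕ) :
    0 ≤ trm m q e k j := by
  unfold trm
  refine mul_nonneg (q_tw_bounds hq1 hq2 _ _ (he _)).1 ?_
  exact Finset.prod_nonneg fun t _ => (q_tw_bounds hq1 hq2 t _ (he t)).2.1.le

include hq1 hq2 in
lemma q_partial {e : ℕ → ℕ} (he : ValidDigits m e) (k : ℕ) :
    ∀ N, 0 ≤ ∏ t ∈ Finset.Icc (k+1) (k+N), tw m q t (e t) ∧
      (∑ j ∈ Finset.range N, trm m q e k j)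
        + ∏ t ∈ Finset.Icc (k+1) (k+N), tw m q t (e t) ≤ 1 := by
  intro N
  induction N with
  | zero => simp [Finset.Icc_eq_empty (by omega : ¬ k + 1 ≤ k + 0)]
  | succ N ih =>
      have hb := q_tw_bounds (q := q) hq1 hq2 (k+N+1) (e (k+N+1)) (he _)
      have hsplit : ∏ t ∈ Finset.Icc (k+1) (k+(N+1)), tw m q t (e t)
          = (∏ t ∈ Finset.Icc (k+1) (k+N), tw m q t (e t)) * tw m q (k+N+1) (e (k+N+1)) :=
        Finset.prod_Icc_succ_top (a := k+1) (b := k+N) (by omega) _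
      have htrm : trm m q e k N
          = tw m (rowSum q) (k+N+1) (e (k+N+1)) * ∏ t ∈ Finset.Icc (k+1) (k+N), tw m q t (e t) := rfl
      constructor
      · rw [hsplit]; exact mul_nonneg ih.1 hb.2.1.le
      · rw [Finset.sum_range_succ, hsplit, htrm]
        nlinarith [ih.1, ih.2, hb.1, hb.2.1, hb.2.2,
          mul_le_mul_of_nonneg_left hb.2.2 ih.1]

include hq1 hq2 in
lemma q_summable {e : ℕ → ℕ} (he : ValidDigits m e) (k : ℕ) :
    Summable (trm m q e k) := by
  apply summable_of_sum_range_le (c := 1) (q_trm_nonneg hq1 hq2 he k)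
  intro N
  have h := q_partial hq1 hq2 he k N
  linarith [h.1, h.2]

include hq1 hq2 in
lemma q_negaShift_mem {e : ℕ → ℕ} (he : ValidDigits m e) (k : ℕ) :
    negaShift m q e k ∈ Set.Icc (0 : ℝ) 1 := by
  rw [negaShift_eq_tsum]
  constructor
  · exact tsum_nonneg (q_trm_nonneg hq1 hq2 he k)
  · apply Real.tsum_le_of_sum_range_le (q_trm_nonneg hq1 hq2 he k)
    intro N
    have h := q_partial hq1 hq2 he k N
    linarith [h.1, h.2]

end qbounds

end Stmt7Aux

/-- if `P` has no zero entries and negative entries occur in infinitely many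
columns, then `F` has no interval of monotonicity inside `[0,1]`. -/
theorem stmt7 (m : ℕ → ℕ) (q p : ℕ → ℕ → ℝ)
    (hq1 : ∀ n i, i ≤ m n → 0 < q n i)
    (hq2 : ∀ n, ∑ i ∈ Finset.range (m n + 1), q n i = 1)
    (hq4 : ∀ d, ValidDigits m d →
      Tendsto (fun N => ∏ j ∈ Finset.Icc 1 N, q j (d j)) atTop (𝓝 0))
    (hp1 : ∀ n i, i ≤ m n → p n i ∈ Set.Ioo (-1 : ℝ) 1)
    (hp2 : ∀ n, ∑ i ∈ Finset.range (m n + 1), p n i = 1)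
    (hp3 : ∀ n k, 1 ≤ k → k ≤ m n → rowSum p n k ∈ Set.Ioo (0 : ℝ) 1)
    (hp4 : ∀ d, ValidDigits m d →
      Tendsto (fun N => ∏ j ∈ Finset.Icc 1 N, |p j (d j)|) atTop (𝓝 0))
    (hne : ∀ n i, i ≤ m n → p n i ≠ 0)
    (hneg : ∀ N : ℕ, ∃ n, N ≤ n ∧ ∃ i ≤ m n, p n i < 0)
    (G : ℝ → ℝ)
    (hG : ∀ d, ValidDigits m d → G (negaVal m q d) = negaVal m p d)
    (hsurj : ∀ x ∈ Set.Icc (0 : ℝ) 1, ∃ d, ValidDigits m d ∧ x = negaVal m q d) :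
    ∀ a b : ℝ, 0 ≤ a → a < b → b ≤ 1 →
      ¬ MonotoneOn G (Set.Icc a b) ∧ ¬ AntitoneOn G (Set.Icc a b) := by
  intro a b ha hab hb
  open Stmt7Aux in
  set x : ℝ := (a + b) / 2 with hxdef
  have hax : a < x := by rw [hxdef]; linarith
  have hxb : x < b := by rw [hxdef]; linarith
  obtain ⟨d, hd, hxd⟩ := hsurj x ⟨by linarith, by linarith⟩
  -- twisted digits, to apply hq4
  set d' : ℕ → ℕ := fun t => if Odd t then d t else m t - d t with hd'def
  have hd'v : ValidDigits m d' := by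
    intro t
    rw [hd'def]
    dsimp only
    split
    · exact hd t
    · exact Nat.sub_le _ _
  have htw : ∀ t, tw m q t (d t) = q t (d' t) := by
    intro t
    rw [hd'def]
    unfold tw
    dsimp only
    split <;> rfl
  set ε : ℝ := min (x - a) (b - x) with hεdef
  have hε : 0 < ε := lt_min (by linarith) (by linarith)
  obtain ⟨n, hn⟩ : ∃ n, ∏ j ∈ Finset.Icc 1 n, q j (d' j) < ε := by
    have := (hq4 d' hd'v).eventually (gt_mem_nhds hε)
    exact this.exists
  -- the prefix product
  set Qhat : ℝ := ∏ t ∈ Finset.Icc 1 n, tw m q t (d t) with hQhatdef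
  have hQhat_eq : Qhat = ∏ j ∈ Finset.Icc 1 n, q j (d' j) :=
    Finset.prod_congr rfl fun t _ => htw t
  have hQhat_lt : Qhat < ε := by rw [hQhat_eq]; exact hn
  have hQhat_nn : 0 ≤ Qhat :=
    Finset.prod_nonneg fun t _ => (q_tw_bounds hq1 hq2 t _ (hd t)).2.1.le
  -- pick the column with a negative entry
  obtain ⟨n0, hn0n, i0, hi0m, hi0neg⟩ := hneg (n + 1)
  have hm0 : 1 ≤ m n0 := by
    by_contra h
    have hmz : m n0 = 0 := by omega
    have h2 := hp2 n0
    rw [hmz] at h2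
    simp [Finset.sum_range_succ] at h2
    have : i0 = 0 := by omega
    rw [this] at hi0neg
    linarith
  have hi0lt : i0 < m n0 := by
    rcases lt_or_eq_of_le hi0m with h | h
    · exact h
    · exfalso
      have h3 := hp3 n0 (m n0) hm0 le_rfl
      have h2 := hp2 n0
      have h4 : (∑ i ∈ Finset.range (m n0 + 1), p n0 i)
          = rowSum p n0 (m n0) + p n0 (m n0) := Finset.sum_range_succ _ _
      rw [h4] at h2
      rw [← h] at h2
      have := h3.2
      rw [← h] at this
      linarith
  obtain ⟨M, hM⟩ : ∃ M, n0 = M + 1 := ⟨n0 - 1, by omega⟩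
  -- the competing digit sequences
  set dd : ℕ → ℕ → ℕ := fun kk t =>
    if t ≤ n then d t else if t = n0 then (if Odd n0 then kk else m n0 - kk)
    else if Odd t then 0 else m t with hdddef
  have hdd_le : ∀ kk t, t ≤ n → dd kk t = d t := by
    intro kk t h; rw [hdddef]; simp [h]
  have hdd_ne : ∀ kk t, ¬ t ≤ n → t ≠ n0 → dd kk t = if Odd t then 0 else m t := by
    intro kk t h1 h2; rw [hdddef]; simp [h1, h2]
  have hdd_n0 : ∀ kk, dd kk n0 = if Odd n0 then kk else m n0 - kk := by
    intro kk; rw [hdddef]; simp [show ¬ n0 ≤ n by omega]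
  have hdd_valid : ∀ kk, kk ≤ m n0 → ValidDigits m (dd kk) := by
    intro kk hkk t
    rw [hdddef]
    dsimp only
    split
    · exact hd t
    · split
      · subst ‹t = n0›
        split
        · exact hkk
        · exact Nat.sub_le _ _
      · split
        · exact Nat.zero_le _
        · exact le_rfl
  have hdd_agree : ∀ k1 k2 t, t ≠ n0 → dd k1 t = dd k2 t := by
    intro k1 k2 t h
    by_cases h1 : t ≤ n <;> simp [hdddef, h1, h]
  have htw_n0 : ∀ (g : ℕ → ℕ → ℝ) kk, kk ≤ m n0 → tw m g n0 (dd kk n0) = g n0 kk := by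
    intro g kk hkk
    rw [hdd_n0]
    unfold tw
    by_cases h : Odd n0
    · simp [h]
    · simp [h, Nat.sub_sub_self hkk]
  -- closed form for the value of dd sequences
  have hclosed : ∀ (f : ℕ → ℕ → ℝ) kk, kk ≤ m n0 → negaVal m f (dd kk) =
      (∑ j ∈ Finset.range M, trm m f (dd kk) 0 j)
        + rowSum f n0 kk * ∏ t ∈ Finset.Icc 1 M, tw m f t (dd kk t) := by
    intro f kk hkk
    have hfin : negaVal m f (dd kk) = ∑ j ∈ Finset.range n0, trm m f (dd kk) 0 j := by
      rw [negaVal_eq_tsum]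
      refine tsum_eq_sum ?_
      intro j hj
      have hj' : n0 ≤ j := by simpa using hj
      have h1 : ¬ (0 + j + 1 ≤ n) := by omega
      have h2 : 0 + j + 1 ≠ n0 := by omega
      unfold trm
      rw [hdd_ne kk _ h1 h2, tw_rowSum_min, zero_mul]
    rw [hfin, hM, Finset.sum_range_succ]
    congr 1
    unfold trm
    have hMn0 : 0 + M + 1 = n0 := by omega
    rw [hMn0, htw_n0 (rowSum f) kk hkk, ← hM]
    simp only [Nat.zero_add]
  -- the difference of values for two digits at position n0
  have hdiff : ∀ (f : ℕ → ℕ → ℝ) k1 k2, k1 ≤ m n0 → k2 ≤ m n0 →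
      negaVal m f (dd k2) - negaVal m f (dd k1) =
        (rowSum f n0 k2 - rowSum f n0 k1) * ∏ t ∈ Finset.Icc 1 M, tw m f t (dd 0 t) := by
    intro f k1 k2 h1 h2
    have hsum_eq : ∀ kk, (∑ j ∈ Finset.range M, trm m f (dd kk) 0 j)
        = ∑ j ∈ Finset.range M, trm m f (dd 0) 0 j := by
      intro kk
      refine Finset.sum_congr rfl fun j hj => ?_
      have hjM := Finset.mem_range.mp hj
      unfold trm
      rw [hdd_agree kk 0 (0 + j + 1) (by omega)]
      congr 1
      refine Finset.prod_congr rfl fun t ht => ?_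
      have h3 := (Finset.mem_Icc.mp ht).2
      rw [hdd_agree kk 0 t (by omega)]
    have hprod_eq : ∀ kk, (∏ t ∈ Finset.Icc 1 M, tw m f t (dd kk t))
        = ∏ t ∈ Finset.Icc 1 M, tw m f t (dd 0 t) := by
      intro kk
      refine Finset.prod_congr rfl fun t ht => ?_
      have h3 := (Finset.mem_Icc.mp ht).2
      rw [hdd_agree kk 0 t (by omega)]
    rw [hclosed f k1 h1, hclosed f k2 h2, hsum_eq k1, hsum_eq k2, hprod_eq k1, hprod_eq k2]
    ring
  -- the dd-values lie in [a,b]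
  have hvq : ∀ kk, kk ≤ m n0 → negaVal m q (dd kk) ∈ Set.Icc a b := by
    intro kk hkk
    have hsd := negaVal_split m q d n (q_summable hq1 hq2 hd 0)
    have hsdd := negaVal_split m q (dd kk) n (q_summable hq1 hq2 (hdd_valid kk hkk) 0)
    have hpre : (∑ j ∈ Finset.range n, trm m q (dd kk) 0 j)
        = ∑ j ∈ Finset.range n, trm m q d 0 j := by
      refine Finset.sum_congr rfl fun j hj => ?_
      have hjn := Finset.mem_range.mp hj
      unfold trm
      rw [hdd_le kk (0 + j + 1) (by omega)]
      congr 1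
      refine Finset.prod_congr rfl fun t ht => ?_
      have h3 := (Finset.mem_Icc.mp ht).2
      rw [hdd_le kk t (by omega)]
    have hQ : (∏ t ∈ Finset.Icc 1 n, tw m q t (dd kk t)) = Qhat := by
      rw [hQhatdef]
      refine Finset.prod_congr rfl fun t ht => ?_
      rw [hdd_le kk t (Finset.mem_Icc.mp ht).2]
    have hdiffx : negaVal m q (dd kk) - x
        = Qhat * (negaShift m q (dd kk) n - negaShift m q d n) := by
      rw [hxd, hsd, hsdd, hpre, hQ]; ring
    have hs1 := q_negaShift_mem hq1 hq2 (hdd_valid kk hkk) n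
    have hs2 := q_negaShift_mem hq1 hq2 hd n
    have hεa : ε ≤ x - a := min_le_left _ _
    have hεb : ε ≤ b - x := min_le_right _ _
    constructor
    · nlinarith [hs1.1, hs1.2, hs2.1, hs2.2]
    · nlinarith [hs1.1, hs1.2, hs2.1, hs2.2]
  -- the products
  set Q0 : ℝ := ∏ t ∈ Finset.Icc 1 M, tw m q t (dd 0 t) with hQ0def
  set P0 : ℝ := ∏ t ∈ Finset.Icc 1 M, tw m p t (dd 0 t) with hP0def
  have hQ0pos : 0 < Q0 :=
    Finset.prod_pos fun t _ => (q_tw_bounds hq1 hq2 t _ (hdd_valid 0 (Nat.zero_le _) t)).2.1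
  have hP0ne : P0 ≠ 0 := by
    rw [hP0def]
    refine Finset.prod_ne_zero_iff.mpr fun t _ => ?_
    have hv := hdd_valid 0 (Nat.zero_le _) t
    unfold tw
    split
    · exact hne t _ hv
    · exact hne t _ (Nat.sub_le _ _)
  -- the main pair construction
  have main : ∀ k1 k2 : ℕ, k2 ≤ m n0 → k1 < k2 →
      ∃ u v : ℝ, u ∈ Set.Icc a b ∧ v ∈ Set.Icc a b ∧ u < v ∧
        G v - G u = (rowSum p n0 k2 - rowSum p n0 k1) * P0 := by
    intro k1 k2 hk2 hlt
    have hk1 : k1 ≤ m n0 := by omega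
    refine ⟨negaVal m q (dd k1), negaVal m q (dd k2), hvq k1 hk1, hvq k2 hk2, ?_, ?_⟩
    · have h := hdiff q k1 k2 hk1 hk2
      have hΔ : rowSum q n0 k1 < rowSum q n0 k2 := by
        unfold rowSum
        apply Finset.sum_lt_sum_of_subset (Finset.range_subset_range.mpr hlt.le)
          (Finset.mem_range.mpr hlt) (by simp) (hq1 n0 k1 (by omega))
        intro j hj _
        exact (hq1 n0 j (by have := Finset.mem_range.mp hj; omega)).le
      rw [← hQ0def] at h
      nlinarith
    · rw [hG _ (hdd_valid k1 hk1), hG _ (hdd_valid k2 hk2)]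
      have h := hdiff p k1 k2 hk1 hk2
      rw [← hP0def] at h
      exact h
  -- row-sum increments for p
  have hd_neg : rowSum p n0 (i0 + 1) - rowSum p n0 i0 = p n0 i0 := by
    unfold rowSum; rw [Finset.sum_range_succ]; ring
  have hd_pos : rowSum p n0 1 - rowSum p n0 0 = rowSum p n0 1 := by
    unfold rowSum; simp
  have hpos1 : 0 < rowSum p n0 1 := (hp3 n0 1 le_rfl hm0).1
  constructor
  · intro hmono
    rcases hP0ne.lt_or_gt with hP | hP
    · obtain ⟨u, v, hu, hv, huv, hGuv⟩ := main 0 1 hm0 Nat.zero_lt_one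
      rw [hd_pos] at hGuv
      have hlt2 : G v - G u < 0 := by rw [hGuv]; exact mul_neg_of_pos_of_neg hpos1 hP
      have := hmono hu hv huv.le
      linarith
    · obtain ⟨u, v, hu, hv, huv, hGuv⟩ := main i0 (i0 + 1) (by omega) (by omega)
      rw [hd_neg] at hGuv
      have hlt2 : G v - G u < 0 := by rw [hGuv]; exact mul_neg_of_neg_of_pos hi0neg hP
      have := hmono hu hv huv.le
      linarith
  · intro hanti
    rcases hP0ne.lt_or_gt with hP | hP
    · obtain ⟨u, v, hu, hv, huv, hGuv⟩ := main i0 (i0 + 1) (by omega) (by omega)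
      rw [hd_neg] at hGuv
      have hlt2 : 0 < G v - G u := by rw [hGuv]; exact mul_pos_of_neg_of_neg hi0neg hP
      have := hanti hu hv huv.le
      linarith
    · obtain ⟨u, v, hu, hv, huv, hGuv⟩ := main 0 1 hm0 Nat.zero_lt_one
      rw [hd_pos] at hGuv
      have hlt2 : 0 < G v - G u := by rw [hGuv]; exact mul_pos hpos1 hP
      have := hanti hu hv huv.le
      linarith
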